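/- arXiv:2310.04305 — 4 statements merged into one kernel-verified Lean document; each statement's English description precedes it below -/
import Mathlib

section
/- Let I (items) and J (stores) be nonempty finite sets, let {I_l}_{l∈L} be a partition of I into labour categories, and let M ≥ m ≥ 0, S_i ≥ 0 (i ∈ I), H_l ≥ 0 (l ∈ L), s_{ij} ≥ 0 (i ∈ I, j ∈ J) be reals. Let x : J → ℕ with y_j = min(1, x_j), fix k ∈ J, and set x' = x + δ_k. Assume: (i) Σ_{i∈I} s_{ij} ≥ M(x_j − y_j) + m for all j ∈ J; (ii) Σ_{j∈J} s_{ij} ≤ S_i for all i ∈ I; (iii) Σ_{i∈I_l} Σ_{j∈J} s_{ij} ≤ min(Σ_{i∈I_l} S_i, H_l) for all l ∈ L. Define S_z = (M − m)·|J|, S_b = M, M_j = M·x'_j for j ∈ J, A_l = Σ_{i∈I_l} S_i, and M_{h_l} = max(0, A_l − H_l). Then Σ_{i∈I} S_i + S_z + S_b ≥ Σ_{j∈J} M_j + Σ_{l∈L} M_{h_l}. Consequently, M_e := Σ_{i∈I} S_i + S_z + S_b − Σ_{j∈J} M_j − Σ_{l∈L} M_{h_l} is nonnegative, and appending a pseudo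 store e with need M_e makes the total supply equal the total need: Σ_{i∈I} S_i + S_z + S_b = Σ_{j∈J} M_j + Σ_{l∈L} M_{h_l} + M_e. -/
open Finset

/-- surplus inventory. With items `I` partitioned into labour categories
by `cat : I → L`, stores `J`, trailer capacities `M ≥ m ≥ 0`, inventories `S ≥ 0`, labour
limits `H ≥ 0`, nonnegative allocations `s i j` satisfying the min-capacity, inventory and
labour constraints for the assignment `x`, and `x' = x + δ_k`, the total supply including
the pseudo items `z` (inventory `(M-m)·|J|`) and `b` (inventory `M`) is at least the total
need of the real stores (`M_j = M x'_j`) and the labour pseudo stores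
(`M_{h_l} = max 0 (A_l - H_l)`); hence the pseudo store `e` with need `M_e` equal to the
surplus balances total supply and total need. -/
theorem surplus_inventory_balance
    (I J L : Type*) [Fintype I] [Fintype J] [Fintype L]
    [Nonempty I] [Nonempty J] [DecidableEq J] [DecidableEq L]
    (cat : I → L)
    (M m : ℝ) (hm : 0 ≤ m) (hMm : m ≤ M)
    (S : I → ℝ) (hS : ∀ i, 0 ≤ S i)
    (H : L → ℝ) (hH : ∀ l, 0 ≤ H l)
    (s : I → J → ℝ) (hs : ∀ i j, 0 ≤ s i j)
    (x : J → ℕ) (k : J)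
    (x' : J → ℕ) (hx' : x' = fun j => x j + if j = k then 1 else 0)
    (h_min_cap : ∀ j, M * ((x j : ℝ) - (min 1 (x j) : ℕ)) + m ≤ ∑ i, s i j)
    (h_inventory : ∀ i, ∑ j, s i j ≤ S i)
    (h_labour : ∀ l, ∑ i ∈ univ.filter (fun i => cat i = l), ∑ j, s i j
        ≤ min (∑ i ∈ univ.filter (fun i => cat i = l), S i) (H l))
    (Sz Sb : ℝ) (hSz : Sz = (M - m) * (Fintype.card J : ℝ)) (hSb : Sb = M)
    (Mst : J → ℝ) (hMst : ∀ j, Mst j = M * (x' j : ℝ))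
    (A : L → ℝ) (hA : ∀ l, A l = ∑ i ∈ univ.filter (fun i => cat i = l), S i)
    (Mh : L → ℝ) (hMh : ∀ l, Mh l = max 0 (A l - H l))
    (Me : ℝ) (hMe : Me = (∑ i, S i) + Sz + Sb - (∑ j, Mst j) - (∑ l, Mh l)) :
    ((∑ i, S i) + Sz + Sb ≥ (∑ j, Mst j) + (∑ l, Mh l)) ∧
    0 ≤ Me ∧
    (∑ i, S i) + Sz + Sb = (∑ j, Mst j) + (∑ l, Mh l) + Me := by

  have hM0 : (0:ℝ) ≤ M := le_trans hm hMm
  -- total allocation, grouped by category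
  have hgroup : ∑ l, ∑ i ∈ univ.filter (fun i => cat i = l), ∑ j, s i j
      = ∑ i, ∑ j, s i j := by
    exact Finset.sum_fiberwise _ _ _
  -- upper bound via labour constraints
  have hupper : ∑ i, ∑ j, s i j ≤ (∑ i, S i) - ∑ l, Mh l := by
    have h1 : ∑ i, ∑ j, s i j ≤ ∑ l, min (A l) (H l) := by
      rw [← hgroup]
      refine Finset.sum_le_sum fun l _ => ?_
      rw [hA l]; exact h_labour l
    have h2 : ∑ l, min (A l) (H l) = ∑ l, (A l - Mh l) := by
      refine Finset.sum_congr rfl fun l _ => ?_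
      rw [hMh l]
      rcases le_total (A l) (H l) with h | h
      · rw [min_eq_left h, max_eq_left (by linarith)]; ring
      · rw [min_eq_right h, max_eq_right (by linarith)]; ring
    have h3 : ∑ l, A l = ∑ i, S i := by
      simp only [hA]
      exact Finset.sum_fiberwise _ _ _
    rw [Finset.sum_sub_distrib] at h2
    linarith [h1, h2]
  -- lower bound via min-capacity constraints
  have hlower : M * (∑ j, (x j : ℝ)) - (M - m) * (Fintype.card J : ℝ)
      ≤ ∑ i, ∑ j, s i j := by
    rw [Finset.sum_comm]
    have : ∀ j : J, M * (x j : ℝ) - (M - m) ≤ ∑ i, s i j := by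
      intro j
      have hy : ((min 1 (x j) : ℕ) : ℝ) ≤ 1 := by
        have : min 1 (x j) ≤ 1 := min_le_left _ _
        exact_mod_cast this
      have := h_min_cap j
      nlinarith [this, hy, hM0]
    calc M * (∑ j, (x j : ℝ)) - (M - m) * (Fintype.card J : ℝ)
        = ∑ j, (M * (x j : ℝ) - (M - m)) := by
          rw [Finset.sum_sub_distrib, Finset.mul_sum, Finset.sum_const]
          simp [Finset.card_univ, mul_comm]
      _ ≤ ∑ j, ∑ i, s i j := Finset.sum_le_sum fun j _ => this j
  -- sum of needs of real stores
  have hMst_sum : ∑ j, Mst j = M * (∑ j, (x j : ℝ)) + M := by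
    have : ∑ j, Mst j = ∑ j, (M * (x j : ℝ) + M * (if j = k then 1 else 0)) := by
      refine Finset.sum_congr rfl fun j _ => ?_
      rw [hMst j, hx']
      push_cast
      ring
    rw [this, Finset.sum_add_distrib, ← Finset.mul_sum, ← Finset.mul_sum]
    have : ∑ j, (if j = k then (1:ℝ) else 0) = 1 := by simp
    rw [this, mul_one]
  have main : (∑ i, S i) + Sz + Sb ≥ (∑ j, Mst j) + (∑ l, Mh l) := by
    rw [hSz, hSb, hMst_sum]
    linarith [hupper, hlower]
  exact ⟨main, by linarith [main, hMe], by linarith [hMe]⟩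
end

section
/- Let I (items) and J (stores) be nonempty finite sets, {I_l}_{l∈L} a partition of I, M ≥ m ≥ 0 reals, S_i ≥ 0, H_l ≥ 0, time horizons T_{ij} = {0,…,t_{ij}}, and demands D_{ij}^t ≥ 0. Let x : J → ℕ, k ∈ J, x' = x + δ_k. Assume there exist d_{ij}^{t,n} with 0 ≤ d_{ij}^{t,n} ≤ D_{ij}^t whose store totals s_j^n = Σ_{i∈I} Σ_t d_{ij}^{t,n} satisfy M(x_j − min(1,x_j)) + m ≤ s_j^n ≤ M x_j for all j ∈ J (with s_j^n = 0 if x_j = 0), whose item totals satisfy Σ_{j∈J} Σ_t d_{ij}^{t,n} ≤ S_i for all i ∈ I, and with Σ_{i∈I_l} Σ_{j∈J} Σ_t d_{ij}^{t,n} ≤ min(Σ_{i∈I_l} S_i, H_l) for all l ∈ L. Build the extended instance: Ĩ = I ⊎ {b, z} with S_b = M and S_z = (M−m)·|J|; J̃ = J ⊎ {h_l : l ∈ L} ⊎ {e} with needs M_j = M·x'_j for j ∈ J, M_{h_l} = max(0, Σ_{i∈I_l} S_i − H_l), and M_e = Σ_{i∈Ĩ} S_i − Σ_{j∈J} M_j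 − Σ_{l∈L} M_{h_l}; upper bounds: d_{ij}^t ≤ D_{ij}^t for i ∈ I, j ∈ J; d_{zj}^0 ≤ M−m and d_{zj}^t = 0 for t > 0 (j ∈ J); d_{bj}^0 unbounded and d_{bj}^t = 0 for t > 0 (j ∈ J); d_{i h_l}^0 unbounded for i ∈ I_l, and d_{i h_l}^t = 0 for all t when i ∉ I_l or for t > 0; d_{ie}^0 unbounded for i ∈ Ĩ and d_{ie}^t = 0 for t > 0. Then the feasible set of the balanced transport problem — d ≥ 0 respecting the upper bounds, Σ_{j∈J̃} Σ_t d_{ij}^t = S_i for all i ∈ Ĩ, and Σ_{i∈Ĩ} Σ_t d_{ij}^t = M_j for all j ∈ J̃ — is nonempty. -/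
open Finset

/-- nonemptiness of the feasible set of the COT instance. Real items `I`
(partitioned by `cat : I → L`) are extended by pseudo items `b = Sum.inr 0` and
`z = Sum.inr 1` (`Ĩ = I ⊕ Fin 2`, supplies `S_b = M`, `S_z = (M-m)·|J|`); real stores `J`
are extended by the labour pseudo stores `h l = Sum.inr (Sum.inl l)` and the surplus pseudo
store `e = Sum.inr (Sum.inr ())` (`J̃ = J ⊕ (L ⊕ Unit)`), with needs `M_j = M x'_j`
(`x' = x + δ_k`), `M_{h_l} = max 0 (A_l - H_l)`, and `M_e` the surplus. Given a feasible
allocation `dn` for the assignment `x` (respecting demands, trailer min/max capacities,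
inventories and labour bounds), the balanced transport problem with the specified pointwise
upper bounds has a nonempty feasible set. -/
theorem extended_cot_instance_feasible
    (I J L : Type*) [Fintype I] [Fintype J] [Fintype L]
    [Nonempty I] [Nonempty J] [DecidableEq J] [DecidableEq L]
    (cat : I → L)
    (M m : ℝ) (hm : 0 ≤ m) (hMm : m ≤ M)
    (S : I → ℝ) (hS : ∀ i, 0 ≤ S i)
    (H : L → ℝ) (hH : ∀ l, 0 ≤ H l)
    (tm : I → J → ℕ)
    (Dem : I → J → ℕ → ℝ) (hDem : ∀ i j t, 0 ≤ Dem i j t)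
    (x : J → ℕ) (k : J)
    (x' : J → ℕ) (hx' : x' = fun j => x j + if j = k then 1 else 0)
    -- hypothesis: a feasible allocation for the current assignment x
    (dn : I → J → ℕ → ℝ)
    (hdn_bounds : ∀ i j t, 0 ≤ dn i j t ∧ dn i j t ≤ Dem i j t)
    (hdn_store : ∀ j,
        M * ((x j : ℝ) - (min 1 (x j) : ℕ)) + m
          ≤ ∑ i, ∑ t ∈ Finset.range (tm i j + 1), dn i j t ∧
        ∑ i, ∑ t ∈ Finset.range (tm i j + 1), dn i j t ≤ M * (x j : ℝ))
    (hdn_store_zero : ∀ j, x j = 0 → ∑ i, ∑ t ∈ Finset.range (tm i j + 1), dn i j t = 0)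
    (hdn_item : ∀ i, ∑ j, ∑ t ∈ Finset.range (tm i j + 1), dn i j t ≤ S i)
    (hdn_labour : ∀ l, ∑ i ∈ univ.filter (fun i => cat i = l),
        ∑ j, ∑ t ∈ Finset.range (tm i j + 1), dn i j t
        ≤ min (∑ i ∈ univ.filter (fun i => cat i = l), S i) (H l))
    -- the extended instance
    (Stil : I ⊕ Fin 2 → ℝ)
    (hStil : Stil = Sum.elim S (fun p => if p = 0 then M else (M - m) * (Fintype.card J : ℝ)))
    (Mh : L → ℝ)
    (hMh : ∀ l, Mh l = max 0 ((∑ i ∈ univ.filter (fun i => cat i = l), S i) - H l))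
    (Mtil : J ⊕ (L ⊕ Unit) → ℝ)
    (hMtil : Mtil = Sum.elim (fun j => M * (x' j : ℝ))
        (Sum.elim Mh (fun _ => (∑ i, Stil i) - (∑ j, M * (x' j : ℝ)) - ∑ l, Mh l)))
    (tmtil : I ⊕ Fin 2 → J ⊕ (L ⊕ Unit) → ℕ)
    (htmtil : tmtil = fun i j =>
        match i, j with
        | Sum.inl i, Sum.inl j => tm i j
        | _, _ => 0) :
    ∃ d : (I ⊕ Fin 2) → (J ⊕ (L ⊕ Unit)) → ℕ → ℝ,
      -- nonnegativity
      (∀ i j t, 0 ≤ d i j t) ∧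
      -- demand upper bounds on real (item, store) pairs
      (∀ (i : I) (j : J) (t : ℕ), t ≤ tm i j → d (Sum.inl i) (Sum.inl j) t ≤ Dem i j t) ∧
      -- filler item z: at most M - m per real store, only on day 0
      (∀ j : J, d (Sum.inr 1) (Sum.inl j) 0 ≤ M - m) ∧
      (∀ (j : J) (t : ℕ), 0 < t → d (Sum.inr 1) (Sum.inl j) t = 0) ∧
      -- breach item b: only on day 0 (unbounded there)
      (∀ (j : J) (t : ℕ), 0 < t → d (Sum.inr 0) (Sum.inl j) t = 0) ∧
      -- labour pseudo store h l: reachable only by real items of category l, only on day 0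
      (∀ (i : I ⊕ Fin 2) (l : L) (t : ℕ),
          (∀ i₀ : I, i = Sum.inl i₀ → cat i₀ ≠ l) → d i (Sum.inr (Sum.inl l)) t = 0) ∧
      (∀ (i : I) (l : L) (t : ℕ), 0 < t → d (Sum.inl i) (Sum.inr (Sum.inl l)) t = 0) ∧
      -- surplus pseudo store e: only on day 0 (unbounded there)
      (∀ (i : I ⊕ Fin 2) (t : ℕ), 0 < t → d i (Sum.inr (Sum.inr ())) t = 0) ∧
      -- exact row sums (supplies)
      (∀ i, ∑ j, ∑ t ∈ Finset.range (tmtil i j + 1), d i j t = Stil i) ∧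
      -- exact column sums (needs)
      (∀ j, ∑ i, ∑ t ∈ Finset.range (tmtil i j + 1), d i j t = Mtil j) := by
  classical
  subst hx' hStil hMtil htmtil
  set s : J → ℝ := fun j => ∑ i, ∑ t ∈ Finset.range (tm i j + 1), dn i j t with hs_def
  set r : I → ℝ := fun i => ∑ j, ∑ t ∈ Finset.range (tm i j + 1), dn i j t with hr_def
  set A : L → ℝ := fun l => ∑ i ∈ univ.filter (fun i => cat i = l), S i with hA_def
  set u : L → ℝ := fun l => ∑ i ∈ univ.filter (fun i => cat i = l), r i with hu_def
  set θ : L → ℝ := fun l => if A l - u l = 0 then 0 else Mh l / (A l - u l) with hθ_def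
  -- basic facts
  have hs_ub : ∀ j, s j ≤ M * (x j : ℝ) := fun j => (hdn_store j).2
  have hz_nonneg : ∀ j, 0 ≤ M * (x j : ℝ) - s j := fun j => by linarith [hs_ub j]
  have hz_le : ∀ j, M * (x j : ℝ) - s j ≤ M - m := by
    intro j
    rcases Nat.eq_zero_or_pos (x j) with h0 | h1
    · have : s j = 0 := hdn_store_zero j h0
      rw [this, h0]
      norm_num
      linarith
    · have hmin : min 1 (x j) = 1 := min_eq_left h1
      have := (hdn_store j).1
      rw [hmin] at this
      push_cast at this
      linarith
  have hleft : ∀ i, 0 ≤ S i - r i := fun i => by linarith [hdn_item i]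
  have hu_le : ∀ l, u l ≤ min (A l) (H l) := fun l => hdn_labour l
  have hAu_nonneg : ∀ l, 0 ≤ A l - u l := fun l => by
    have := (le_min_iff.mp (hu_le l)).1; linarith
  have hMh_nonneg : ∀ l, 0 ≤ Mh l := fun l => by rw [hMh l]; exact le_max_left _ _
  have hMh_le : ∀ l, Mh l ≤ A l - u l := by
    intro l
    have h1 := (le_min_iff.mp (hu_le l)).1
    have h2 := (le_min_iff.mp (hu_le l)).2
    rw [hMh l]
    exact max_le (by linarith) (by linarith)
  have hθ_nonneg : ∀ l, 0 ≤ θ l := by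
    intro l
    simp only [hθ_def]
    split_ifs with h
    · exact le_rfl
    · exact div_nonneg (hMh_nonneg l) (hAu_nonneg l)
  have hθ_le_one : ∀ l, θ l ≤ 1 := by
    intro l
    simp only [hθ_def]
    split_ifs with h
    · norm_num
    · rw [div_le_one (lt_of_le_of_ne (hAu_nonneg l) (Ne.symm h))]
      exact hMh_le l
  have hθ_prod : ∀ l, (A l - u l) * θ l = Mh l := by
    intro l
    simp only [hθ_def]
    split_ifs with h
    · have := hMh_le l
      have := hMh_nonneg l
      rw [h] at *
      linarith
    · field_simp
  -- sum of fibers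
  have hfib : ∀ l, ∑ i ∈ univ.filter (fun i => cat i = l), (S i - r i) = A l - u l := by
    intro l
    rw [Finset.sum_sub_distrib]
  -- swap sums : ∑ j, s j = ∑ i, r i
  have hswap : ∑ j, s j = ∑ i, r i := by
    simp only [hs_def, hr_def]
    rw [Finset.sum_comm]
  -- the z surplus is nonnegative
  have hzsurplus : 0 ≤ (M - m) * (Fintype.card J : ℝ) - ∑ j, (M * (x j : ℝ) - s j) := by
    have : ∑ j, (M * (x j : ℝ) - s j) ≤ ∑ _j : J, (M - m) :=
      Finset.sum_le_sum fun j _ => hz_le j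
    simp only [Finset.sum_const, Finset.card_univ, nsmul_eq_mul] at this
    linarith
  refine ⟨fun i j t =>
      match i, j with
      | Sum.inl i, Sum.inl j => dn i j t
      | Sum.inr p, Sum.inl j =>
          if t = 0 then (if p = 0 then (if j = k then M else 0) else M * (x j : ℝ) - s j)
          else 0
      | Sum.inl i, Sum.inr (Sum.inl l) =>
          if t = 0 ∧ cat i = l then (S i - r i) * θ l else 0
      | Sum.inr _, Sum.inr (Sum.inl _) => 0
      | Sum.inl i, Sum.inr (Sum.inr _) =>
          if t = 0 then (S i - r i) * (1 - θ (cat i)) else 0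
      | Sum.inr p, Sum.inr (Sum.inr _) =>
          if t = 0 ∧ p = 1 then (M - m) * (Fintype.card J : ℝ) - ∑ j, (M * (x j : ℝ) - s j)
          else 0,
    ?_, ?_, ?_, ?_, ?_, ?_, ?_, ?_, ?_, ?_⟩
  · -- nonnegativity
    rintro (i | p) (j | l | u') t
    · exact (hdn_bounds i j t).1
    · simp only
      split_ifs with h
      · exact mul_nonneg (hleft i) (hθ_nonneg l)
      · exact le_rfl
    · simp only
      split_ifs with h
      · exact mul_nonneg (hleft i) (by linarith [hθ_le_one (cat i)])
      · exact le_rfl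
    · simp only
      split_ifs with ht hp hk
      · linarith
      · exact le_rfl
      · exact hz_nonneg j
      · exact le_rfl
    · exact le_rfl
    · simp only
      split_ifs with h
      · exact hzsurplus
      · exact le_rfl
  · -- demand bounds
    intro i j t _
    exact (hdn_bounds i j t).2
  · -- z per-store cap
    intro j
    simp only [if_pos rfl]
    have h10 : (1 : Fin 2) ≠ 0 := by decide
    rw [if_neg h10]
    exact hz_le j
  · -- z only day 0
    intro j t ht
    simp only
    rw [if_neg (by omega)]
  · -- b only day 0
    intro j t ht
    simp only
    rw [if_neg (by omega)]
  · -- labour store category restriction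
    rintro (i | p) l t h
    · simp only
      rw [if_neg]
      rintro ⟨-, hc⟩
      exact h i rfl hc
    · rfl
  · -- labour store only day 0
    intro i l t ht
    simp only
    rw [if_neg]
    rintro ⟨h0, -⟩
    omega
  · -- surplus store only day 0
    rintro (i | p) t ht
    · simp only
      rw [if_neg (by omega)]
    · simp only
      rw [if_neg]
      rintro ⟨h0, -⟩
      omega
  · -- row sums
    rintro (i | p)
    · simp only [Fintype.sum_sum_type, Sum.elim_inl, Sum.elim_inr, Nat.zero_add,
        Finset.sum_range_one, true_and, if_pos rfl]
      have hri : ∑ j, ∑ t ∈ Finset.range (tm i j + 1), dn i j t = r i := rfl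
      rw [hri]
      rw [Finset.sum_ite_eq univ (cat i) (fun l => (S i - r i) * θ l)]
      simp only [Finset.mem_univ, if_true]
      have hunit : ∀ (f : Unit → ℝ), ∑ u : Unit, f u = f () := fun f => by
        simp [Finset.univ_unique]
      rw [hunit]
      ring
    · fin_cases p
      · -- breach item b
        simp only [Fintype.sum_sum_type, Sum.elim_inr, Nat.zero_add, Finset.sum_range_one,
          if_pos rfl]
        norm_num
      · -- filler item z
        simp only [Fintype.sum_sum_type, Sum.elim_inr, Nat.zero_add, Finset.sum_range_one,
          if_pos rfl]
        norm_num
  · -- column sums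
    rintro (j | l | u')
    · simp only [Fintype.sum_sum_type, Fin.sum_univ_two, Sum.elim_inl, Nat.zero_add,
        Finset.sum_range_one, if_pos rfl]
      have hsj : ∑ i, ∑ t ∈ Finset.range (tm i j + 1), dn i j t = s j := rfl
      rw [hsj]
      norm_num
      split_ifs with hk <;> push_cast <;> ring
    · -- labour pseudo store
      simp only [Fintype.sum_sum_type, Fin.sum_univ_two, Sum.elim_inr, Sum.elim_inl,
        Nat.zero_add, Finset.sum_range_one, true_and]
      rw [← Finset.sum_filter]
      rw [← Finset.sum_mul, hfib l, hθ_prod l]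
      ring
    · -- surplus pseudo store
      simp only [Fintype.sum_sum_type, Fin.sum_univ_two, Sum.elim_inr, Sum.elim_inl,
        Nat.zero_add, Finset.sum_range_one, true_and, if_pos rfl]
      norm_num
      have hfw : ∑ i, (S i - r i) * θ (cat i) = ∑ l, Mh l := by
        rw [← Finset.sum_fiberwise univ cat (fun i => (S i - r i) * θ (cat i))]
        refine Finset.sum_congr rfl fun l _ => ?_
        have hcongr : ∑ i ∈ univ.filter (fun i => cat i = l), (S i - r i) * θ (cat i)
            = ∑ i ∈ univ.filter (fun i => cat i = l), (S i - r i) * θ l := by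
          refine Finset.sum_congr rfl fun i hi => ?_
          rw [(Finset.mem_filter.mp hi).2]
        rw [hcongr, ← Finset.sum_mul, hfib l, hθ_prod l]
      have h1 : ∑ i, (S i - r i) * (1 - θ (cat i))
          = (∑ i, S i - ∑ i, r i) - ∑ l, Mh l := by
        have : ∀ i, (S i - r i) * (1 - θ (cat i))
            = (S i - r i) - (S i - r i) * θ (cat i) := fun i => by ring
        rw [Finset.sum_congr rfl fun i _ => this i, Finset.sum_sub_distrib,
          Finset.sum_sub_distrib, hfw]
      have h3 : ∑ j, M * ((x j : ℝ) + if j = k then 1 else 0)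
          = (∑ j, M * (x j : ℝ)) + M := by
        have heach : ∀ j, M * ((x j : ℝ) + if j = k then 1 else 0)
            = M * (x j : ℝ) + (if j = k then M else 0) := by
          intro j; split_ifs <;> ring
        rw [Finset.sum_congr rfl fun j _ => heach j, Finset.sum_add_distrib,
          Finset.sum_ite_eq' univ k (fun _ => M)]
        simp
      rw [h1, h3, hswap]
      ring
end

section
/- Let I (real items) be a finite set partitioned into categories {I_l}_{l∈L}, let Ĩ ⊇ I be a finite superset (including pseudo items), let J (real stores) be a finite set, and let J̃ = J ⊎ {h_l : l ∈ L} ⊎ {e}. Let S_i ≥ 0 (i ∈ Ĩ) be supplies, let H_l ≥ 0, set A_l = Σ_{i∈I_l} S_i and M_{h_l} = max(0, A_l − H_l), and let T_{ij} be finite time index sets. Suppose d = (d_{ij}^t) ≥ 0 satisfies: Σ_{j∈J̃} Σ_{t∈T_{ij}} d_{ij}^t = S_i for all i ∈ Ĩ; Σ_{i∈Ĩ} Σ_{t∈T_{ij}} d_{i h_l}^t = M_{h_l} for all l ∈ L; and d_{i h_l}^t = 0 whenever i ∉ I_l. Then for every l ∈ L, the total allocation of category-l items to real stores satisfies Σ_{i∈I_l}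 Σ_{j∈J} Σ_{t∈T_{ij}} d_{ij}^t ≤ H_l. -/
/-!
Fix a category `l`. Every item of `I_l` splits its supply between real stores, the pseudo store
`h_l` and the rest, so its real-store total is at most `S_i` minus what it sends to `h_l`. Since
only items of `I_l` reach `h_l`, their shipments to `h_l` add up to the whole need
`max 0 (A_l - H_l)`, and summing over `I_l` bounds the real-store total by
`A_l - max 0 (A_l - H_l) ≤ H_l`.
-/

open Finset

lemma Fintype.sum_inl_add_le_sum {α β M : Type*} [Fintype α] [Fintype β] [AddCommMonoid M]
    [PartialOrder M] [IsOrderedAddMonoid M] (f : α ⊕ β → M) (hf : ∀ b, 0 ≤ f (.inr b)) (b : β) :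
    ∑ a, f (.inl a) + f (.inr b) ≤ ∑ x, f x := by
  rw [Fintype.sum_sum_type]
  gcongr
  exact single_le_sum (fun b _ => hf b) (mem_univ b)

lemma Fintype.sum_eq_sum_filter_of_eq_zero_off_inl {α β M : Type*} [Fintype α] [Fintype β]
    [AddCommMonoid M] (p : α → Prop) [DecidablePred p] (g : α ⊕ β → M)
    (hg : ∀ x, (∀ a, x = .inl a → ¬ p a) → g x = 0) :
    ∑ x, g x = ∑ a ∈ univ.filter p, g (.inl a) := by
  rw [Fintype.sum_sum_type, Fintype.sum_eq_zero _ fun b => hg (.inr b) (by simp), add_zero,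
    sum_filter]
  refine Fintype.sum_congr _ _ fun a => ?_
  split_ifs with ha
  · rfl
  · exact hg _ fun a' h => Sum.inl_injective h ▸ ha

theorem labour_encoding_correct_general
    (I K J L : Type*) [Fintype I] [Fintype K] [Fintype J] [Fintype L] [DecidableEq L]
    (cat : I → L)
    (S : I ⊕ K → ℝ)
    (H : L → ℝ)
    (tm : I ⊕ K → J ⊕ (L ⊕ Unit) → ℕ)
    (d : I ⊕ K → J ⊕ (L ⊕ Unit) → ℕ → ℝ)
    (hd_nonneg : ∀ i j t, 0 ≤ d i j t)
    (h_row : ∀ i, ∑ j, ∑ t ∈ Finset.range (tm i j + 1), d i j t = S i)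
    (h_col_h : ∀ l, ∑ i, ∑ t ∈ Finset.range (tm i (Sum.inr (Sum.inl l)) + 1),
        d i (Sum.inr (Sum.inl l)) t
        = max 0 ((∑ i ∈ univ.filter (fun i => cat i = l), S (Sum.inl i)) - H l))
    (h_zero : ∀ (i : I ⊕ K) (l : L) (t : ℕ),
        (∀ i₀ : I, i = Sum.inl i₀ → cat i₀ ≠ l) → d i (Sum.inr (Sum.inl l)) t = 0) :
    ∀ l, ∑ i ∈ univ.filter (fun i => cat i = l), ∑ j : J,
        ∑ t ∈ Finset.range (tm (Sum.inl i) (Sum.inl j) + 1), d (Sum.inl i) (Sum.inl j) t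
      ≤ H l := by
  intro l
  let s (i : I ⊕ K) (j : J ⊕ (L ⊕ Unit)) : ℝ := ∑ t ∈ range (tm i j + 1), d i j t
  have h_need : ∑ i ∈ univ.filter (fun i => cat i = l), s (.inl i) (.inr (.inl l))
      = max 0 ((∑ i ∈ univ.filter (fun i => cat i = l), S (.inl i)) - H l) :=
    (Fintype.sum_eq_sum_filter_of_eq_zero_off_inl _ _
      fun i hi => sum_eq_zero fun t _ => h_zero i l t hi).symm.trans (h_col_h l)
  have h_split : ∀ i : I, ∑ j : J, s (.inl i) (.inl j) + s (.inl i) (.inr (.inl l))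
      ≤ S (.inl i) := fun i =>
    h_row (.inl i) ▸ Fintype.sum_inl_add_le_sum (s (.inl i))
      (fun _ => sum_nonneg fun _ _ => hd_nonneg _ _ _) (.inl l)
  calc ∑ i ∈ univ.filter (fun i => cat i = l), ∑ j : J, s (.inl i) (.inl j)
      ≤ ∑ i ∈ univ.filter (fun i => cat i = l), (S (.inl i) - s (.inl i) (.inr (.inl l))) :=
        sum_le_sum fun i _ => le_sub_iff_add_le.mpr (h_split i)
    _ = (∑ i ∈ univ.filter (fun i => cat i = l), S (.inl i))
          - max 0 ((∑ i ∈ univ.filter (fun i => cat i = l), S (.inl i)) - H l) := by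
        rw [sum_sub_distrib, h_need]
    _ ≤ H l := sub_le_comm.mp (le_max_right _ _)

/-- correctness of the labour-constraint encoding. Real items `I`
(partitioned into categories by `cat : I → L`) are extended by pseudo items `K`
(`Ĩ = I ⊕ K`), and real stores `J` are extended by the labour pseudo stores `h l`
and the surplus pseudo store `e` (`J̃ = J ⊕ L ⊕ Unit`). If a nonnegative plan `d`
has row sums equal to the supplies `S`, the column sum at each `h l` equals
`M_{h_l} = max 0 (A_l - H_l)` with `A_l = ∑_{i ∈ I_l} S i`, and `d i (h l) t = 0`
whenever `i ∉ I_l`, then for every category `l` the total allocation of category-`l`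
items to real stores is at most `H l`. -/
theorem labour_encoding_correct
    (I K J L : Type*) [Fintype I] [Fintype K] [Fintype J] [Fintype L] [DecidableEq L]
    (cat : I → L)
    (S : I ⊕ K → ℝ) (hS : ∀ i, 0 ≤ S i)
    (H : L → ℝ) (hH : ∀ l, 0 ≤ H l)
    (tm : I ⊕ K → J ⊕ (L ⊕ Unit) → ℕ)
    (d : I ⊕ K → J ⊕ (L ⊕ Unit) → ℕ → ℝ)
    (hd_nonneg : ∀ i j t, 0 ≤ d i j t)
    (h_row : ∀ i, ∑ j, ∑ t ∈ Finset.range (tm i j + 1), d i j t = S i)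
    (h_col_h : ∀ l, ∑ i, ∑ t ∈ Finset.range (tm i (Sum.inr (Sum.inl l)) + 1),
        d i (Sum.inr (Sum.inl l)) t
        = max 0 ((∑ i ∈ univ.filter (fun i => cat i = l), S (Sum.inl i)) - H l))
    (h_zero : ∀ (i : I ⊕ K) (l : L) (t : ℕ),
        (∀ i₀ : I, i = Sum.inl i₀ → cat i₀ ≠ l) → d i (Sum.inr (Sum.inl l)) t = 0) :
    ∀ l, ∑ i ∈ univ.filter (fun i => cat i = l), ∑ j : J,
        ∑ t ∈ Finset.range (tm (Sum.inl i) (Sum.inl j) + 1), d (Sum.inl i) (Sum.inl j) t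
      ≤ H l :=
  labour_encoding_correct_general I K J L cat S H tm d hd_nonneg h_row h_col_h h_zero
end

section
/- Let R be a nonempty finite index set and let N ⊆ R. For μ > 0, reals P_r, and reals D_r > 0 for r ∈ N, define the domain Ω = { d ∈ ℝ^R : 0 < d_r < D_r for r ∈ N, and 0 < d_r for r ∈ R∖N } and the function O(d) = Σ_{r∈R} P_r d_r − μ Σ_{r∈R} d_r ln d_r − μ Σ_{r∈N} (D_r − d_r) ln(D_r − d_r) − Σ_{r∈R} c_r d_r, where c_r ∈ ℝ are fixed linear coefficients (arising from Lagrange multipliers of the supply and need constraints). Then O is strictly concave on Ω and has at most one critical point in Ω; a point d* ∈ Ω is a critical point (equivalently, the unique global maximizer of O on Ω) if and only if d*_r = D_r·(1 − 1/(1 + e^{(P_r − c_r)/μ})) for r ∈ N and d*_r = e^{(P_r − c_r)/μ − 1} for r ∈ R∖N. -/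
/-!
The objective is separable: `O d = ∑ r, g_r (d r)`, where `g_r x = (P r - c r) x + μ H(x)`
(plus `μ H(D r - x)` when `r ∈ N`) with `H = negMulLog`, and `Ω` is the product of the open
intervals on which the `g_r` live. Strict concavity of `H` makes every `g_r` strictly concave,
hence so is `O`; its gradient vanishes iff every `g_r' (d r) = 0`, and these scalar equations are
solved in closed form (a logistic law on `N`, a Gibbs law off `N`). For a concave function a
critical point is a global maximizer (restrict to a segment and compare a slope with the
derivative), strict concavity makes the maximizer strict, and conversely an interior maximizer
is a critical point.
-/

open Finset Set Real

section Extrema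

theorem ConcaveOn.isMaxOn_of_hasFDerivAt_zero {E : Type*} [NormedAddCommGroup E]
    [NormedSpace ℝ E] {s : Set E} {f : E → ℝ} {x : E} (hf : ConcaveOn ℝ s f) (hx : x ∈ s)
    (hf' : HasFDerivAt f (0 : E →L[ℝ] ℝ) x) : IsMaxOn f s x := by
  intro y hy
  set g : ℝ → ℝ := f ∘ AffineMap.lineMap x y
  have hg : ConcaveOn ℝ (Icc 0 1) g :=
    (hf.comp_affineMap _).subset (fun t ht => hf.1.lineMap_mem hx hy ht) (convex_Icc 0 1)
  have hg' : HasDerivAt g 0 0 := by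
    have hf'' : HasFDerivAt f (0 : E →L[ℝ] ℝ) (AffineMap.lineMap x y (0 : ℝ)) := by
      simpa using hf'
    simpa using hf''.comp_hasDerivAt (0 : ℝ) AffineMap.hasDerivAt_lineMap
  have hslope : slope g 0 1 ≤ 0 :=
    hg.slope_le_of_hasDerivAt (left_mem_Icc.2 zero_le_one) (right_mem_Icc.2 zero_le_one)
      one_pos hg'
  simpa [g, slope_def_field] using hslope

theorem StrictConcaveOn.isMaxOn_iff_forall_lt {𝕜 E β : Type*} [Field 𝕜] [LinearOrder 𝕜]
    [IsStrictOrderedRing 𝕜] [AddCommMonoid E] [SMul 𝕜 E] [AddCommMonoid β] [LinearOrder β]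
    [IsOrderedAddMonoid β] [Module 𝕜 β] [PosSMulMono 𝕜 β] {s : Set E} {f : E → β} {x : E}
    (hf : StrictConcaveOn 𝕜 s f) (hx : x ∈ s) :
    IsMaxOn f s x ↔ ∀ y ∈ s, y ≠ x → f y < f x := by
  refine ⟨fun hmax y hy hyx => (hmax hy).lt_of_ne fun hfy => hyx ?_, fun h y hy => ?_⟩
  · exact hf.eq_of_isMaxOn (fun z hz => hfy ▸ hmax hz) hmax hy hx
  · rcases eq_or_ne y x with rfl | hyx
    · exact le_rfl
    · exact (h y hy hyx).le

theorem StrictConcaveOn.fderiv_eq_zero_iff_forall_lt {E : Type*} [NormedAddCommGroup E]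
    [NormedSpace ℝ E] {s : Set E} {f : E → ℝ} {x : E} (hf : StrictConcaveOn ℝ s f)
    (hs : IsOpen s) (hx : x ∈ s) (hd : DifferentiableAt ℝ f x) :
    fderiv ℝ f x = 0 ↔ ∀ y ∈ s, y ≠ x → f y < f x := by
  rw [← hf.isMaxOn_iff_forall_lt hx]
  exact ⟨fun h => hf.concaveOn.isMaxOn_of_hasFDerivAt_zero hx (h ▸ hd.hasFDerivAt),
    fun h => (h.isLocalMax (hs.mem_nhds hx)).fderiv_eq_zero⟩

end Extrema

section StrictConcave

theorem StrictConcaveOn.comp_const_sub {𝕜 E β : Type*} [CommRing 𝕜] [PartialOrder 𝕜]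
    [AddCommGroup E] [Module 𝕜 E] [AddCommMonoid β] [PartialOrder β] [SMul 𝕜 β] {s : Set E} {f : E → β}
    (hf : StrictConcaveOn 𝕜 s f) (z : E) :
    StrictConcaveOn 𝕜 ((z - ·) ⁻¹' s) fun x => f (z - x) := by
  have hcombo : ∀ (x y : E) (a b : 𝕜), a + b = 1 →
      z - (a • x + b • y) = a • (z - x) + b • (z - y) :=
    fun x y a b hab => by linear_combination (norm := module) -(hab • z)
  refine ⟨fun x hx y hy a b ha hb hab => ?_, fun x hx y hy hxy a b ha hb hab => ?_⟩
  · simpa only [Set.mem_preimage, hcombo x y a b hab] using hf.1 hx hy ha hb hab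
  · simpa only [hcombo x y a b hab] using hf.2 hx hy (sub_right_injective.ne hxy) ha hb hab

variable {𝕜 : Type*} [Field 𝕜] [LinearOrder 𝕜] [IsStrictOrderedRing 𝕜]

theorem StrictConcaveOn.const_mul {E : Type*} [AddCommMonoid E] [SMul 𝕜 E] {s : Set E}
    {f : E → 𝕜} {c : 𝕜} (hf : StrictConcaveOn 𝕜 s f) (hc : 0 < c) :
    StrictConcaveOn 𝕜 s fun x => c * f x :=
  ⟨hf.1, fun x hx y hy hxy a b ha hb hab => by
    simpa only [smul_eq_mul, mul_add, mul_left_comm c] using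
      mul_lt_mul_of_pos_left (hf.2 hx hy hxy ha hb hab) hc⟩

theorem StrictConcaveOn.sum_pi {ι : Type*} [Fintype ι] {E : ι → Type*}
    [∀ i, AddCommMonoid (E i)] [∀ i, Module 𝕜 (E i)] {s : ∀ i, Set (E i)} {f : ∀ i, E i → 𝕜}
    (hf : ∀ i, StrictConcaveOn 𝕜 (s i) (f i)) :
    StrictConcaveOn 𝕜 (univ.pi s) fun x => ∑ i, f i (x i) := by
  refine ⟨convex_pi fun i _ => (hf i).1, fun x hx y hy hxy a b ha hb hab => ?_⟩
  obtain ⟨j, hj⟩ := Function.ne_iff.1 hxy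
  simp only [smul_eq_mul, mul_sum, ← sum_add_distrib]
  refine sum_lt_sum (fun i _ => ?_) ⟨j, mem_univ j, ?_⟩
  · simpa using (hf i).concaveOn.2 (hx i trivial) (hy i trivial) ha.le hb.le hab
  · simpa using (hf j).2 (hx j trivial) (hy j trivial) hj ha hb hab

end StrictConcave

section Separable

variable {ι 𝕜 : Type*} [Fintype ι] [NontriviallyNormedField 𝕜] {f : ι → 𝕜 → 𝕜} {f' : ι → 𝕜}
  {x : ι → 𝕜}

theorem hasFDerivAt_sum_apply (hf : ∀ i, HasDerivAt (f i) (f' i) (x i)) :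
    HasFDerivAt (fun x => ∑ i, f i (x i))
      (∑ i, f' i • ContinuousLinearMap.proj (R := 𝕜) (φ := fun _ : ι => 𝕜) i) x :=
  HasFDerivAt.fun_sum fun i _ => (hf i).comp_hasFDerivAt x (hasFDerivAt_apply i x)

theorem differentiableAt_sum_apply (hf : ∀ i, DifferentiableAt 𝕜 (f i) (x i)) :
    DifferentiableAt 𝕜 (fun x => ∑ i, f i (x i)) x :=
  (hasFDerivAt_sum_apply fun i => (hf i).hasDerivAt).differentiableAt

theorem sum_smul_proj_eq_zero_iff [DecidableEq ι] {a : ι → 𝕜} :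
    ∑ i, a i • ContinuousLinearMap.proj (R := 𝕜) (φ := fun _ : ι => 𝕜) i = 0 ↔ a = 0 := by
  refine ⟨fun h => funext fun i => ?_, fun h => by ext; simp [h]⟩
  simpa [Pi.single_apply] using congr($h (Pi.single i 1))

theorem fderiv_sum_apply_eq_zero_iff (hf : ∀ i, DifferentiableAt 𝕜 (f i) (x i)) :
    fderiv 𝕜 (fun x => ∑ i, f i (x i)) x = 0 ↔ ∀ i, deriv (f i) (x i) = 0 := by
  classical
  rw [(hasFDerivAt_sum_apply fun i => (hf i).hasDerivAt).fderiv, sum_smul_proj_eq_zero_iff,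
    funext_iff]
  rfl

end Separable

section EntropicGain

noncomputable def entropicGain (μ A x : ℝ) : ℝ := A * x + μ * negMulLog x

noncomputable def cappedEntropicGain (μ A D x : ℝ) : ℝ :=
  entropicGain μ A x + μ * negMulLog (D - x)

variable {μ A D x : ℝ}

theorem strictConcaveOn_entropicGain (hμ : 0 < μ) :
    StrictConcaveOn ℝ (Ici 0) (entropicGain μ A) :=
  ((LinearMap.mulLeft ℝ A).concaveOn (convex_Ici 0)).add_strictConcaveOn
    (strictConcaveOn_negMulLog.const_mul hμ)

theorem strictConcaveOn_cappedEntropicGain (hμ : 0 < μ) :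
    StrictConcaveOn ℝ (Icc 0 D) (cappedEntropicGain μ A D) := by
  have hcap : StrictConcaveOn ℝ (Iic D) fun x => μ * negMulLog (D - x) := by
    simpa using (strictConcaveOn_negMulLog.comp_const_sub D).const_mul hμ
  exact ((strictConcaveOn_entropicGain hμ).subset Icc_subset_Ici_self (convex_Icc 0 D)).add
    (hcap.subset Icc_subset_Iic_self (convex_Icc 0 D))

theorem hasDerivAt_entropicGain (hx : x ≠ 0) :
    HasDerivAt (entropicGain μ A) (A - μ * (log x + 1)) x :=
  (((hasDerivAt_id x).const_mul A).add ((hasDerivAt_negMulLog hx).const_mul μ)).congr_deriv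
    (by ring)

theorem hasDerivAt_cappedEntropicGain (hx : x ≠ 0) (hxD : x ≠ D) :
    HasDerivAt (cappedEntropicGain μ A D) (A - μ * log x + μ * log (D - x)) x := by
  have hcap : HasDerivAt (fun x => negMulLog (D - x)) (log (D - x) + 1) x :=
    ((hasDerivAt_negMulLog (sub_ne_zero.2 hxD.symm)).comp x
      ((hasDerivAt_id x).const_sub D)).congr_deriv (by ring)
  exact ((hasDerivAt_entropicGain hx).add (hcap.const_mul μ)).congr_deriv (by ring)

theorem deriv_entropicGain_eq_zero_iff (hμ : μ ≠ 0) (hx : 0 < x) :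
    deriv (entropicGain μ A) x = 0 ↔ x = exp (A / μ - 1) := by
  rw [(hasDerivAt_entropicGain hx.ne').deriv]
  conv_rhs => rw [← exp_log hx, exp_eq_exp, eq_sub_iff_add_eq, eq_div_iff hμ]
  constructor <;> intro h <;> linear_combination -h

theorem deriv_cappedEntropicGain_eq_zero_iff (hμ : μ ≠ 0) (hx : 0 < x) (hxD : x < D) :
    deriv (cappedEntropicGain μ A D) x = 0 ↔ x = D * (1 - 1 / (1 + exp (A / μ))) := by
  have hDx : 0 < D - x := sub_pos.2 hxD
  have hodds : A - μ * log x + μ * log (D - x) = 0 ↔ x / (D - x) = exp (A / μ) := by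
    conv_rhs =>
      rw [← exp_log (div_pos hx hDx), exp_eq_exp, log_div hx.ne' hDx.ne', eq_div_iff hμ]
    constructor <;> intro h <;> linear_combination -h
  rw [(hasDerivAt_cappedEntropicGain hx.ne' hxD.ne).deriv, hodds, div_eq_iff hDx.ne']
  field_simp
  constructor <;> intro h <;> linear_combination h

end EntropicGain

section Coordinate

variable (capped : Prop) [Decidable capped] (μ A D : ℝ)

noncomputable def drmGain : ℝ → ℝ :=
  if capped then cappedEntropicGain μ A D else entropicGain μ A

def drmInterval : Set ℝ := if capped then Ioo 0 D else Ioi 0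

noncomputable def drmOptimum : ℝ :=
  if capped then D * (1 - 1 / (1 + exp (A / μ))) else exp (A / μ - 1)

variable {capped μ A D}

theorem isOpen_drmInterval : IsOpen (drmInterval capped D) := by
  unfold drmInterval; split_ifs
  exacts [isOpen_Ioo, isOpen_Ioi]

theorem strictConcaveOn_drmGain (hμ : 0 < μ) :
    StrictConcaveOn ℝ (drmInterval capped D) (drmGain capped μ A D) := by
  unfold drmInterval drmGain; split_ifs
  · exact (strictConcaveOn_cappedEntropicGain hμ).subset Ioo_subset_Icc_self (convex_Ioo 0 D)
  · exact (strictConcaveOn_entropicGain hμ).subset Ioi_subset_Ici_self (convex_Ioi 0)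

theorem differentiableAt_drmGain {x : ℝ} (hx : x ∈ drmInterval capped D) :
    DifferentiableAt ℝ (drmGain capped μ A D) x := by
  unfold drmInterval drmGain at *; split_ifs at *
  · exact (hasDerivAt_cappedEntropicGain hx.1.ne' hx.2.ne).differentiableAt
  · exact (hasDerivAt_entropicGain (ne_of_gt hx)).differentiableAt

theorem deriv_drmGain_eq_zero_iff (hμ : μ ≠ 0) {x : ℝ} (hx : x ∈ drmInterval capped D) :
    deriv (drmGain capped μ A D) x = 0 ↔ x = drmOptimum capped μ A D := by
  unfold drmInterval drmGain drmOptimum at *; split_ifs at *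
  exacts [deriv_cappedEntropicGain_eq_zero_iff hμ hx.1 hx.2,
    deriv_entropicGain_eq_zero_iff hμ hx]

end Coordinate

section Objective

variable {R : Type*} [DecidableEq R] (N : Finset R) (μ : ℝ) (P D c : R → ℝ)

theorem sum_drmGain_eq [Fintype R] (d : R → ℝ) :
    ∑ r, drmGain (r ∈ N) μ (P r - c r) (D r) (d r) = (∑ r, P r * d r)
      - μ * (∑ r, d r * log (d r)) - μ * (∑ r ∈ N, (D r - d r) * log (D r - d r))
      - ∑ r, c r * d r := by
  have hsplit : ∀ r, drmGain (r ∈ N) μ (P r - c r) (D r) (d r) = (P r - c r) * d r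
      + μ * negMulLog (d r) + if r ∈ N then μ * negMulLog (D r - d r) else 0 := fun r => by
    unfold drmGain; split_ifs <;> simp [cappedEntropicGain, entropicGain]
  simp only [hsplit, sum_add_distrib, sum_ite_mem, Finset.univ_inter, ← mul_sum, sub_mul,
    sum_sub_distrib, negMulLog, neg_mul, sum_neg_distrib]
  ring

theorem univ_pi_drmInterval :
    univ.pi (fun r => drmInterval (r ∈ N) (D r))
      = {d : R → ℝ | (∀ r ∈ N, 0 < d r ∧ d r < D r) ∧ (∀ r ∉ N, 0 < d r)} := by
  ext d
  simp only [mem_pi, mem_univ, true_implies, drmInterval, mem_ofPred_eq]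
  refine ⟨fun h => ⟨fun r hr => ?_, fun r hr => ?_⟩, fun h r => ?_⟩
  · simpa [hr] using h r
  · simpa [hr] using h r
  · split_ifs with hr
    exacts [h.1 r hr, h.2 r hr]

end Objective

theorem drm_stationary_point_characterization_general
    (R : Type*) [Fintype R] [DecidableEq R]
    (N : Finset R)
    (μ : ℝ) (hμ : 0 < μ)
    (P D c : R → ℝ)
    (Ω : Set (R → ℝ))
    (hΩ : Ω = {d : R → ℝ | (∀ r ∈ N, 0 < d r ∧ d r < D r) ∧ (∀ r ∉ N, 0 < d r)})
    (O : (R → ℝ) → ℝ)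
    (hO : ∀ d, O d = (∑ r, P r * d r) - μ * (∑ r, d r * Real.log (d r))
        - μ * (∑ r ∈ N, (D r - d r) * Real.log (D r - d r)) - ∑ r, c r * d r)
    (dform : R → ℝ)
    (hdform : ∀ r, dform r = if r ∈ N
        then D r * (1 - 1 / (1 + Real.exp ((P r - c r) / μ)))
        else Real.exp ((P r - c r) / μ - 1)) :
    StrictConcaveOn ℝ Ω O ∧
    (∀ d₁ ∈ Ω, ∀ d₂ ∈ Ω, fderiv ℝ O d₁ = 0 → fderiv ℝ O d₂ = 0 → d₁ = d₂) ∧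
    (∀ d ∈ Ω, (fderiv ℝ O d = 0 ↔ d = dform)) ∧
    (∀ d ∈ Ω, (fderiv ℝ O d = 0 ↔ (∀ d' ∈ Ω, d' ≠ d → O d' < O d))) := by
  have hΩ' : Ω = univ.pi fun r => drmInterval (r ∈ N) (D r) :=
    hΩ.trans (univ_pi_drmInterval N D).symm
  have hO' : O = fun d => ∑ r, drmGain (r ∈ N) μ (P r - c r) (D r) (d r) :=
    funext fun d => (hO d).trans (sum_drmGain_eq N μ P D c d).symm
  have hmem : ∀ d ∈ Ω, ∀ r, d r ∈ drmInterval (r ∈ N) (D r) :=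
    fun d hd r => (hΩ' ▸ hd) r trivial
  have hconc : StrictConcaveOn ℝ Ω O :=
    hΩ' ▸ hO' ▸ StrictConcaveOn.sum_pi fun r => strictConcaveOn_drmGain hμ
  have hcrit : ∀ d ∈ Ω, fderiv ℝ O d = 0 ↔ d = dform := fun d hd => by
    rw [hO', fderiv_sum_apply_eq_zero_iff fun r => differentiableAt_drmGain (hmem d hd r),
      funext_iff]
    exact forall_congr' fun r => (deriv_drmGain_eq_zero_iff hμ.ne' (hmem d hd r)).trans
      (by rw [hdform r]; rfl)
  refine ⟨hconc, fun d₁ h₁ d₂ h₂ e₁ e₂ => ((hcrit d₁ h₁).1 e₁).trans ((hcrit d₂ h₂).1 e₂).symm,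
    hcrit, fun d hd => hconc.fderiv_eq_zero_iff_forall_lt ?_ hd ?_⟩
  · exact hΩ' ▸ isOpen_set_pi finite_univ fun r _ => isOpen_drmInterval
  · exact hO' ▸ differentiableAt_sum_apply fun r => differentiableAt_drmGain (hmem d hd r)

/-- stationary-point characterization underlying DRM. On the open convex
domain `Ω` (coordinates in `N` lie in `(0, D r)`, the others in `(0, ∞)`), the doubly
entropy-regularized Lagrangian
`O d = ∑ P r d r - μ ∑ d r ln (d r) - μ ∑_{r ∈ N} (D r - d r) ln (D r - d r) - ∑ c r d r`
is strictly concave and has at most one critical point; moreover a point `d ∈ Ω` is a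
critical point iff it equals the closed-form point
`d r = D r (1 - 1/(1 + e^{(P r - c r)/μ}))` for `r ∈ N`, `d r = e^{(P r - c r)/μ - 1}`
otherwise, and being a critical point is equivalent to being the unique global maximizer
of `O` on `Ω`. -/
theorem drm_stationary_point_characterization
    (R : Type*) [Fintype R] [Nonempty R] [DecidableEq R]
    (N : Finset R)
    (μ : ℝ) (hμ : 0 < μ)
    (P D c : R → ℝ) (hD : ∀ r ∈ N, 0 < D r)
    (Ω : Set (R → ℝ))
    (hΩ : Ω = {d : R → ℝ | (∀ r ∈ N, 0 < d r ∧ d r < D r) ∧ (∀ r ∉ N, 0 < d r)})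
    (O : (R → ℝ) → ℝ)
    (hO : ∀ d, O d = (∑ r, P r * d r) - μ * (∑ r, d r * Real.log (d r))
        - μ * (∑ r ∈ N, (D r - d r) * Real.log (D r - d r)) - ∑ r, c r * d r)
    (dform : R → ℝ)
    (hdform : ∀ r, dform r = if r ∈ N
        then D r * (1 - 1 / (1 + Real.exp ((P r - c r) / μ)))
        else Real.exp ((P r - c r) / μ - 1)) :
    StrictConcaveOn ℝ Ω O ∧
    (∀ d₁ ∈ Ω, ∀ d₂ ∈ Ω, fderiv ℝ O d₁ = 0 → fderiv ℝ O d₂ = 0 → d₁ = d₂) ∧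
    (∀ d ∈ Ω, (fderiv ℝ O d = 0 ↔ d = dform)) ∧
    (∀ d ∈ Ω, (fderiv ℝ O d = 0 ↔ (∀ d' ∈ Ω, d' ≠ d → O d' < O d))) :=
  drm_stationary_point_characterization_general R N μ hμ P D c Ω hΩ O hO dform hdform
end
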